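/- Let M be a monotone gridding matrix whose cell graph G_M is a path of length k (all other entries empty). Then there exists a permutation π ∈ Grid(M) with grid-width at least k/4. -/

import Mathlib

namespace PPM

noncomputable section

/-- Intervalicity: minimum number of pairwise disjoint integer intervals covering `A`. -/
def intervalicity {n : ℕ} (A : Finset (Fin n)) : ℕ :=
  sInf {m | ∃ F : Finset (Finset (Fin n)), F.card = m ∧
    (∀ I ∈ F, ∃ a b : Fin n, I = Finset.Icc a b) ∧
    (F : Set (Finset (Fin n))).PairwiseDisjoint id ∧
    F.sup id = A}

/-- Grid-complexity of a point set. -/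
def gridComplexity {n : ℕ} (S : Finset (Fin n × Fin n)) : ℕ :=
  max (intervalicity (S.image Prod.fst)) (intervalicity (S.image Prod.snd))

/-- The diagram of a permutation. -/
def diagram {n : ℕ} (π : Equiv.Perm (Fin n)) : Finset (Fin n × Fin n) :=
  Finset.univ.image (fun i => (i, π i))

/-- Rooted binary trees with labeled leaves. -/
inductive GTree (α : Type) where
  | leaf : α → GTree α
  | node : GTree α → GTree α → GTree α

namespace GTree
variable {α : Type}

def leafList : GTree α → List α
  | leaf a => [a]
  | node l r => l.leafList ++ r.leafList

def subtrees : GTree α → List (GTree α)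
  | leaf a => [leaf a]
  | node l r => node l r :: (l.subtrees ++ r.subtrees)

def IsCaterpillar : GTree α → Prop
  | leaf _ => True
  | node l r => ((∃ a, l = leaf a) ∨ (∃ a, r = leaf a)) ∧ IsCaterpillar l ∧ IsCaterpillar r

def leafDepth [DecidableEq α] : GTree α → α → ℕ
  | leaf _, _ => 0
  | node l r, a => if a ∈ l.leafList then l.leafDepth a + 1 else r.leafDepth a + 1

end GTree

/-- Grid-width of a grid tree. -/
def treeGW {n : ℕ} (T : GTree (Fin n × Fin n)) : ℕ :=
  (T.subtrees.map (fun t => gridComplexity t.leafList.toFinset)).foldr max 0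

/-- `T` is a grid tree of `π`: its leaves are labeled bijectively by the points of `π`. -/
def IsGridTree {n : ℕ} (π : Equiv.Perm (Fin n)) (T : GTree (Fin n × Fin n)) : Prop :=
  T.leafList.Nodup ∧ T.leafList.toFinset = diagram π

/-- Grid-width of a permutation. -/
def gw {n : ℕ} (π : Equiv.Perm (Fin n)) : ℕ :=
  sInf {w | ∃ T, IsGridTree π T ∧ treeGW T = w}

/-- Path-width of a permutation: minimum over caterpillar grid trees. -/
def pw {n : ℕ} (π : Equiv.Perm (Fin n)) : ℕ :=
  sInf {w | ∃ T, IsGridTree π T ∧ T.IsCaterpillar ∧ treeGW T = w}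

/-- The `i`-th prefix point set of `π` in `σ`-ordering. -/
def prefixSet {n : ℕ} (π σ : Equiv.Perm (Fin n)) (i : Fin n) : Finset (Fin n × Fin n) :=
  (Finset.univ.filter (fun j => j ≤ i)).image (fun j => (σ j, π (σ j)))

/-- Path-width of `π` in `σ`-ordering. -/
def pwOrd {n : ℕ} (π σ : Equiv.Perm (Fin n)) : ℕ :=
  Finset.univ.sup (fun i => gridComplexity (prefixSet π σ i))

/-- Horizontal path-width: `σ` is the identity (left-to-right order). -/
def hpw {n : ℕ} (π : Equiv.Perm (Fin n)) : ℕ := pwOrd π 1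

/-- Vertical path-width: `σ = π⁻¹` (bottom-to-top order). -/
def vpw {n : ℕ} (π : Equiv.Perm (Fin n)) : ℕ := pwOrd π π⁻¹

/-- Pattern containment: `τ` contains `π`. -/
def Contains {n k : ℕ} (τ : Equiv.Perm (Fin n)) (π : Equiv.Perm (Fin k)) : Prop :=
  ∃ f : Fin k → Fin n, StrictMono f ∧ ∀ i j, π i < π j ↔ τ (f i) < τ (f j)

/-- A permutation class, given by its members of each length. -/
abbrev PermClass := ∀ n : ℕ, Set (Equiv.Perm (Fin n))

/-- Closure under pattern containment. -/
def IsPermClass (C : PermClass) : Prop :=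
  ∀ {n k : ℕ} (τ : Equiv.Perm (Fin n)) (π : Equiv.Perm (Fin k)),
    τ ∈ C n → Contains τ π → π ∈ C k

/-- `π` is griddable by the monotone gridding matrix `M`
(`some true` = Inc, `some false` = Dec, `none` = empty);
columns are the first index, rows the second. -/
def MonGriddable {n k l : ℕ} (M : Fin k → Fin l → Option Bool)
    (π : Equiv.Perm (Fin n)) : Prop :=
  ∃ (c : Fin n → Fin k) (r : Fin n → Fin l), Monotone c ∧ Monotone r ∧
    (∀ i : Fin n, (M (c i) (r (π i))).isSome) ∧
    (∀ i j : Fin n, i < j → c i = c j → r (π i) = r (π j) →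
      ∀ b, M (c i) (r (π i)) = some b → (if b then π i < π j else π j < π i))

/-- Adjacency of cells in the cell graph of a monotone gridding matrix:
both cells nonempty, sharing a row or a column, with only empty cells in between. -/
def MonCellAdj {k l : ℕ} (M : Fin k → Fin l → Option Bool)
    (p q : Fin k × Fin l) : Prop :=
  (M p.1 p.2).isSome ∧ (M q.1 q.2).isSome ∧
  ((p.1 = q.1 ∧ p.2 ≠ q.2 ∧ ∀ j : Fin l,
      ((p.2 < j ∧ j < q.2) ∨ (q.2 < j ∧ j < p.2)) → M p.1 j = Option.none) ∨
   (p.2 = q.2 ∧ p.1 ≠ q.1 ∧ ∀ i : Fin k,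
      ((p.1 < i ∧ i < q.1) ∨ (q.1 < i ∧ i < p.1)) → M i p.2 = Option.none))

/-- The cell graph of a monotone gridding matrix. -/
def monCellGraph {k l : ℕ} (M : Fin k → Fin l → Option Bool) :
    SimpleGraph (Fin k × Fin l) :=
  SimpleGraph.fromRel (MonCellAdj M)

/-- A consistent orientation of a monotone gridding matrix, signs coded by `Bool`. -/
def ConsistentOrientation {k l : ℕ} (M : Fin k → Fin l → Option Bool)
    (c : Fin k → Bool) (r : Fin l → Bool) : Prop :=
  ∀ i j, (M i j = some true → c i = r j) ∧ (M i j = some false → c i ≠ r j)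

/-- The refinement `M^{×q}` of a monotone gridding matrix. -/
def refine {k l : ℕ} (M : Fin k → Fin l → Option Bool) (q : ℕ) :
    Fin (q * k) → Fin (q * l) → Option Bool :=
  fun i j =>
    match M ⟨i.val / q, Nat.div_lt_of_lt_mul i.isLt⟩
            ⟨j.val / q, Nat.div_lt_of_lt_mul j.isLt⟩ with
    | some true => if i.val % q = j.val % q then some true else none
    | some false => if i.val % q + j.val % q = q - 1 then some false else none
    | none => none

/-- The restriction of `π` to the position set `P` is order-isomorphic to a member of `C`. -/
def CellPattern {n : ℕ} (π : Equiv.Perm (Fin n)) (P : Finset (Fin n))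
    (C : PermClass) : Prop :=
  ∃ m : ℕ, ∃ σ ∈ C m, ∃ f : Fin m → Fin n, StrictMono f ∧
    Finset.univ.image f = P ∧ ∀ i j, σ i < σ j ↔ π (f i) < π (f j)

/-- `π` is griddable by a gridding matrix with permutation-class entries. -/
def GenGriddable {n k l : ℕ} (M : Fin k → Fin l → PermClass)
    (π : Equiv.Perm (Fin n)) : Prop :=
  ∃ (c : Fin n → Fin k) (r : Fin n → Fin l), Monotone c ∧ Monotone r ∧
    ∀ (a : Fin k) (b : Fin l),
      (Finset.univ.filter (fun i => c i = a ∧ r (π i) = b) = ∅) ∨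
      CellPattern π (Finset.univ.filter (fun i => c i = a ∧ r (π i) = b)) (M a b)

/-- A class containing some nonempty permutation. -/
def ClassNonempty (C : PermClass) : Prop := ∃ n, 0 < n ∧ (C n).Nonempty

/-- An infinite class: members of arbitrarily large lengths. -/
def ClassInfinite (C : PermClass) : Prop := ∀ m, ∃ n, m ≤ n ∧ (C n).Nonempty

/-- Cell adjacency for a general gridding matrix. -/
def GenCellAdj {k l : ℕ} (M : Fin k → Fin l → PermClass)
    (p q : Fin k × Fin l) : Prop :=
  ClassNonempty (M p.1 p.2) ∧ ClassNonempty (M q.1 q.2) ∧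
  ((p.1 = q.1 ∧ p.2 ≠ q.2 ∧ ∀ j : Fin l,
      ((p.2 < j ∧ j < q.2) ∨ (q.2 < j ∧ j < p.2)) → ¬ ClassNonempty (M p.1 j)) ∨
   (p.2 = q.2 ∧ p.1 ≠ q.1 ∧ ∀ i : Fin k,
      ((p.1 < i ∧ i < q.1) ∨ (q.1 < i ∧ i < p.1)) → ¬ ClassNonempty (M i p.2)))

/-- The cell graph of a general gridding matrix. -/
def genCellGraph {k l : ℕ} (M : Fin k → Fin l → PermClass) :
    SimpleGraph (Fin k × Fin l) :=
  SimpleGraph.fromRel (GenCellAdj M)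

/-- Unbounded horizontal path-width of a class. -/
def UnboundedHPW (C : PermClass) : Prop := ∀ K, ∃ n, ∃ π ∈ C n, K < hpw π

/-- Unbounded vertical path-width of a class. -/
def UnboundedVPW (C : PermClass) : Prop := ∀ K, ∃ n, ∃ π ∈ C n, K < vpw π

/-- `(p, q)` is a bumper. -/
def Bumper {k l : ℕ} (M : Fin k → Fin l → PermClass) (p q : Fin k × Fin l) : Prop :=
  (UnboundedHPW (M q.1 q.2) ∧ p.1 = q.1) ∨ (UnboundedVPW (M q.1 q.2) ∧ p.2 = q.2)

/-- The cell graph of `M` contains a bumper-ended path. -/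
def HasBumperEndedPath {k l : ℕ} (M : Fin k → Fin l → PermClass) : Prop :=
  ∃ (L : List (Fin k × Fin l)) (h : 2 ≤ L.length),
    List.Chain' (genCellGraph M).Adj L ∧ L.Nodup ∧
    Bumper M (L.get ⟨1, by omega⟩) (L.get ⟨0, by omega⟩) ∧
    Bumper M (L.get ⟨L.length - 2, by omega⟩) (L.get ⟨L.length - 1, by omega⟩)

/-- Horizontal alternation: all even entries (1-based values) precede all odd entries. -/
def IsHorizAlt {n : ℕ} (π : Equiv.Perm (Fin n)) : Prop :=
  ∀ i j : Fin n, i < j → ¬(Odd ((π i).val + 1) ∧ Even ((π j).val + 1))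

/-- `σ` is monotone on the positions satisfying `P`. -/
def MonOn {n : ℕ} (σ : Equiv.Perm (Fin n)) (P : Fin n → Prop) : Prop :=
  (∀ i j, i < j → P i → P j → σ i < σ j) ∨ (∀ i j, i < j → P i → P j → σ j < σ i)

/-- Monotone horizontal alternation. -/
def IsMonHorizAlt {n : ℕ} (σ : Equiv.Perm (Fin n)) : Prop :=
  IsHorizAlt σ ∧ MonOn σ (fun i => Odd ((σ i).val + 1)) ∧
    MonOn σ (fun i => Even ((σ i).val + 1))

/-- The 1×2 horizontal monotone juxtaposition matrix. -/
def juxH (b₁ b₂ : Bool) : Fin 2 → Fin 1 → Option Bool :=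
  fun i _ => some (if i = 0 then b₁ else b₂)

/-- No three consecutive cells of the list share a row or a column. -/
def ProperTurning {k l : ℕ} (L : List (Fin k × Fin l)) : Prop :=
  ∀ a b c : Fin k × Fin l, [a, b, c] <:+: L →
    ¬(a.1 = b.1 ∧ b.1 = c.1) ∧ ¬(a.2 = b.2 ∧ b.2 = c.2)

/-- The class of increasing (`true`) or decreasing (`false`) permutations. -/
def monClass (b : Bool) : PermClass :=
  fun n => {π | ∀ i j : Fin n, i < j → (if b then π i < π j else π j < π i)}

end

end PPM

open PPM

/-!
Give each of the `k + 1` cells of the path `3 (k + 1)` points, and interleave the points of cells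
sharing a column (in the horizontal order) or a row (in the vertical order), so that equally
placed points of consecutive cells on a common line are adjacent. A projection with `b` boundary
points needs at least `b / 2` intervals, and every grid tree has a subtree holding between a
third and two thirds of the points. If the numbers of its points in the cells vary by at least
`k` along the path, every unit of variation yields a boundary point of one of its projections.
Otherwise no cell is empty or full, so every column and every row of the path carries a boundary
point, and a path of length `k` through cells that meet each line in a contiguous stretch uses at
least `k + 2` columns and rows.
-/

open Finset

lemma Nat.eq_and_eq_of_mul_add_eq {d a b r s : ℕ} (hr : r < d) (hs : s < d)
    (h : a * d + r = b * d + s) : a = b ∧ r = s := by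
  have hrs : r = s := by
    simpa [Nat.mod_eq_of_lt hr, Nat.mod_eq_of_lt hs] using congrArg (· % d) h
  subst hrs
  exact ⟨Nat.eq_of_mul_eq_mul_right (by omega) (Nat.add_right_cancel h), rfl⟩

lemma Nat.le_of_mul_add_le_mul_add {d a b r s : ℕ} (hs : s < d) (h : a * d + r ≤ b * d + s) :
    a ≤ b := by
  by_contra! hab
  have := Nat.mul_le_mul_right d (Nat.succ_le_of_lt hab)
  rw [Nat.succ_mul] at this
  omega

lemma Nat.dist_le_sum_range_dist (c : ℕ → ℕ) {i j k : ℕ} (hi : i ≤ k) (hj : j ≤ k) :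
    Nat.dist (c i) (c j) ≤ ∑ t ∈ range k, Nat.dist (c t) (c (t + 1)) := by
  induction k generalizing i j with
  | zero => simp [Nat.le_zero.1 hi, Nat.le_zero.1 hj, Nat.dist_self]
  | succ k ih =>
    rw [sum_range_succ]
    have hk := Nat.dist.triangle_inequality (c i) (c k) (c j)
    rcases hi.lt_or_eq with hi | rfl <;> rcases hj.lt_or_eq with hj | rfl
    · exact (ih (by omega) (by omega)).trans (Nat.le_add_right _ _)
    · have := ih (i := i) (j := k) (by omega) le_rfl
      omega
    · have := ih (i := k) (j := j) le_rfl (by omega)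
      rw [Nat.dist_comm (c (k + 1)) (c k)] at hk
      omega
    · simp [Nat.dist_self]

lemma Finset.sum_le_sum_filter_add_sum_filter {ι : Type*} {s : Finset ι} {p q : ι → Prop}
    [DecidablePred p] [DecidablePred q] (hpq : ∀ i ∈ s, p i ∨ q i) (f : ι → ℕ) :
    ∑ i ∈ s, f i ≤ ∑ i ∈ s with p i, f i + ∑ i ∈ s with q i, f i := by
  rw [← sum_filter_add_sum_filter_not s p]
  refine Nat.add_le_add_left (sum_le_sum_of_subset fun i hi => ?_) _
  simp only [mem_filter] at hi ⊢
  exact ⟨hi.1, (hpq i hi.1).resolve_left hi.2⟩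

lemma SimpleGraph.Walk.IsPath.eq_add_one_or_of_adj_getVert {V : Type*} {G : SimpleGraph V}
    {u v : V} {w : G.Walk u v} (hw : w.IsPath) (hedges : ∀ e ∈ G.edgeSet, e ∈ w.edges)
    {s t : ℕ} (hs : s ≤ w.length) (ht : t ≤ w.length) (h : G.Adj (w.getVert s) (w.getVert t)) :
    s = t + 1 ∨ t = s + 1 := by
  obtain ⟨i, hi, he⟩ := w.mk_mem_edges_iff_exists.1 (hedges _ ((G.mem_edgeSet).2 h))
  have hinj := hw.getVert_injOn
  rcases Sym2.eq_iff.1 he with ⟨h₁, h₂⟩ | ⟨h₁, h₂⟩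
  · have := hinj (show i ≤ w.length by omega) hs h₁
    have := hinj (show i + 1 ≤ w.length by omega) ht h₂
    omega
  · have := hinj (show i ≤ w.length by omega) ht h₁
    have := hinj (show i + 1 ≤ w.length by omega) hs h₂
    omega

namespace PPM

section Boundary

variable {n : ℕ}

def boundary (A : Finset (Fin n)) : Finset (Fin n) :=
  {i | ∃ j : Fin n, (j : ℕ) = i + 1 ∧ (i ∈ A ↔ j ∉ A)}

lemma boundary_sup_subset (F : Finset (Finset (Fin n))) :
    boundary (F.sup id) ⊆ F.biUnion boundary := by
  intro i hi
  obtain ⟨j, hj, hij⟩ := (mem_filter.1 hi).2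
  simp only [Finset.mem_sup, id] at hij
  simp only [mem_biUnion, boundary, mem_filter, mem_univ, true_and]
  by_cases hiA : ∃ I ∈ F, i ∈ I
  · obtain ⟨I, hI, hiI⟩ := hiA
    exact ⟨I, hI, j, hj, iff_of_true hiI fun hjI => hij.1 ⟨I, hI, hiI⟩ ⟨I, hI, hjI⟩⟩
  · obtain ⟨I, hI, hjI⟩ := not_not.1 (mt hij.2 hiA)
    exact ⟨I, hI, j, hj, iff_of_false (fun hiI => hiA ⟨I, hI, hiI⟩) (not_not.2 hjI)⟩

lemma card_boundary_Icc_le_two (a b : Fin n) : #(boundary (Icc a b)) ≤ 2 := by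
  have hinj : Set.InjOn (fun i => decide (i ∈ Icc a b)) (boundary (Icc a b)) := by
    intro i hi i' hi' h
    obtain ⟨j, hj, hij⟩ := (mem_filter.1 hi).2
    obtain ⟨j', hj', hij'⟩ := (mem_filter.1 hi').2
    simp only [decide_eq_decide, mem_Icc, Fin.le_def] at h hij hij'
    ext
    omega
  simpa using card_le_card_of_injOn _ (fun _ _ => mem_univ _) hinj

lemma intervalicity_set_nonempty (A : Finset (Fin n)) :
    {m | ∃ F : Finset (Finset (Fin n)), F.card = m ∧
      (∀ I ∈ F, ∃ a b : Fin n, I = Icc a b) ∧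
      (F : Set (Finset (Fin n))).PairwiseDisjoint id ∧ F.sup id = A}.Nonempty := by
  refine ⟨_, A.image ({·}), rfl, ?_, ?_, ?_⟩
  · simpa using fun a _ => ⟨a, a, (Icc_self a).symm⟩
  · simpa [Set.PairwiseDisjoint, Set.Pairwise, Function.onFun] using fun _ _ _ _ h => Ne.symm h
  · ext; simp

lemma card_boundary_le_two_mul_intervalicity (A : Finset (Fin n)) :
    #(boundary A) ≤ 2 * intervalicity A := by
  obtain ⟨F, hcard, hIcc, -, rfl⟩ := Nat.sInf_mem (intervalicity_set_nonempty A)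
  calc #(boundary (F.sup id)) ≤ #(F.biUnion boundary) := card_le_card (boundary_sup_subset F)
    _ ≤ ∑ I ∈ F, #(boundary I) := card_biUnion_le
    _ ≤ ∑ _I ∈ F, 2 := sum_le_sum fun I hI => by
        obtain ⟨a, b, rfl⟩ := hIcc I hI
        exact card_boundary_Icc_le_two a b
    _ = 2 * intervalicity (F.sup id) := by rw [sum_const, smul_eq_mul, mul_comm, hcard]; rfl

lemma exists_mem_boundary_of_lt {A : Finset (Fin n)} {i i' : Fin n} (hlt : i < i')
    (h : ¬(i ∈ A ↔ i' ∈ A)) : ∃ b ∈ boundary A, i ≤ b ∧ b < i' := by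
  obtain ⟨d, hd⟩ := Nat.exists_eq_add_of_lt hlt
  induction d generalizing i' with
  | zero =>
    refine ⟨i, mem_filter.2 ⟨mem_univ _, i', hd, ?_⟩, le_rfl, hlt⟩
    tauto
  | succ d ih =>
    set i'' : Fin n := ⟨i + d + 1, by omega⟩
    have hi'' : (i'' : ℕ) = i + d + 1 := rfl
    by_cases h' : i'' ∈ A ↔ i' ∈ A
    · obtain ⟨b, hb, hib, hbi⟩ := ih (i' := i'') (Fin.lt_def.2 (by omega))
        (by rwa [h']) rfl
      exact ⟨b, hb, hib, hbi.trans (Fin.lt_def.2 (by omega))⟩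
    · refine ⟨i'', mem_filter.2 ⟨mem_univ _, i', by omega, by tauto⟩,
        Fin.le_def.2 (by omega), Fin.lt_def.2 (by omega)⟩

lemma card_le_card_boundary {γ : Type*} [LinearOrder γ] {A : Finset (Fin n)} {g : Fin n → γ}
    (hg : Monotone g) {C : Finset γ} (hC : ∀ c ∈ C, ∃ i ∈ A, ∃ i' ∉ A, g i = c ∧ g i' = c) :
    #C ≤ #(boundary A) := by
  have hsub : C ⊆ (boundary A).image g := by
    intro c hc
    obtain ⟨i, hi, i', hi', rfl, hc'⟩ := hC c hc
    have hne : i ≠ i' := fun h => hi' (h ▸ hi)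
    rcases hne.lt_or_gt with hlt | hlt
    · obtain ⟨b, hb, hib, hbi⟩ := exists_mem_boundary_of_lt hlt (by tauto)
      exact mem_image.2 ⟨b, hb, le_antisymm (hc' ▸ hg hbi.le) (hg hib)⟩
    · obtain ⟨b, hb, hib, hbi⟩ := exists_mem_boundary_of_lt hlt (by tauto)
      exact mem_image.2 ⟨b, hb, le_antisymm (hg hbi.le) (hc' ▸ hg hib)⟩
  exact (card_le_card hsub).trans card_image_le

end Boundary

section Rank

variable {ι : Type*} [Fintype ι] {f : ι → ℕ} {i j : ι}

def rank (f : ι → ℕ) (i : ι) : ℕ := #{j | f j < f i}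

lemma rank_le_rank (h : f i ≤ f j) : rank f i ≤ rank f j :=
  card_le_card (monotone_filter_right _ fun _ _ h' => h'.trans_le h)

lemma rank_lt_rank (h : f i < f j) : rank f i < rank f j :=
  card_lt_card <| (ssubset_iff_of_subset (monotone_filter_right _ fun _ _ h' => h'.trans h)).2
    ⟨i, by simpa using h, by simp⟩

lemma rank_lt_rank_iff : rank f i < rank f j ↔ f i < f j :=
  ⟨fun h => lt_of_not_ge fun h' => (rank_le_rank h').not_gt h, rank_lt_rank⟩

lemma rank_le_rank_iff : rank f i ≤ rank f j ↔ f i ≤ f j := by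
  simpa only [not_lt] using rank_lt_rank_iff.not

lemma rank_lt_card (f : ι → ℕ) (i : ι) : rank f i < Fintype.card ι :=
  card_lt_card <| (ssubset_iff_of_subset (subset_univ _)).2 ⟨i, mem_univ _, by simp⟩

lemma rank_injective (hf : Function.Injective f) : Function.Injective (rank f) := by
  intro i j h
  by_contra hne
  rcases (hf.ne hne).lt_or_gt with hlt | hlt
  · exact (rank_lt_rank hlt).ne h
  · exact (rank_lt_rank hlt).ne' h

lemma rank_eq_rank_add_one (hf : Function.Injective f) (h : f j = f i + 1) :
    rank f j = rank f i + 1 := by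
  classical
  have : univ.filter (fun l => f l < f j) = insert i (univ.filter fun l => f l < f i) := by
    ext l
    simp only [mem_filter, mem_univ, true_and, mem_insert, h, Nat.lt_succ_iff_lt_or_eq, hf.eq_iff]
    tauto
  rw [rank, this, card_insert_of_notMem (by simp)]
  rfl

noncomputable def rankEquiv (hf : Function.Injective f) : ι ≃ Fin (Fintype.card ι) :=
  Equiv.ofBijective (fun i => ⟨rank f i, rank_lt_card f i⟩) <|
    (Fintype.bijective_iff_injective_and_card _).2
      ⟨fun _ _ h => rank_injective hf (Fin.mk.inj_iff.1 h), by simp⟩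

lemma rankEquiv_lt_iff (hf : Function.Injective f) :
    rankEquiv hf i < rankEquiv hf j ↔ f i < f j := rank_lt_rank_iff

lemma rankEquiv_le_iff (hf : Function.Injective f) :
    rankEquiv hf i ≤ rankEquiv hf j ↔ f i ≤ f j := rank_le_rank_iff

end Rank

/-- The layout along one axis of `k + 1` cells of `m` points each. -/
structure Axis (k m L : ℕ) where
  line : ℕ → Fin L
  order : ℕ → Equiv.Perm (Fin m)

namespace Axis

variable {k m L : ℕ} (a : Axis k m L)

/-- Points of cells sharing a line interleave: the coordinate is lexicographic in
(line, place within the cell, cell), so equally placed points of two cells of a line that are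
consecutive along the path are adjacent. -/
def key (p : Fin (k + 1) × Fin m) : ℕ := ((a.line p.1 : ℕ) * m + a.order p.1 p.2) * (k + 1) + p.1

lemma key_injective : Function.Injective a.key := by
  intro p q h
  obtain ⟨h₁, ht⟩ := Nat.eq_and_eq_of_mul_add_eq p.1.isLt q.1.isLt h
  have hfst : p.1 = q.1 := Fin.ext ht
  rw [hfst] at h₁
  obtain ⟨-, hj⟩ := Nat.eq_and_eq_of_mul_add_eq (a.order q.1 p.2).isLt (a.order q.1 q.2).isLt h₁
  exact Prod.ext hfst ((a.order q.1).injective (Fin.ext hj))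

lemma line_le_line_of_key_le {p q : Fin (k + 1) × Fin m} (h : a.key p ≤ a.key q) :
    a.line p.1 ≤ a.line q.1 :=
  Nat.le_of_mul_add_le_mul_add (a.order q.1 q.2).isLt (Nat.le_of_mul_add_le_mul_add q.1.isLt h)

noncomputable def pos : Fin (k + 1) × Fin m ≃ Fin (Fintype.card (Fin (k + 1) × Fin m)) :=
  rankEquiv a.key_injective

lemma pos_lt_pos_iff {p q : Fin (k + 1) × Fin m} : a.pos p < a.pos q ↔ a.key p < a.key q :=
  rankEquiv_lt_iff _

lemma pos_lt_pos_iff_of_fst_eq {p q : Fin (k + 1) × Fin m} (h : p.1 = q.1) :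
    a.pos p < a.pos q ↔ a.order p.1 p.2 < a.order p.1 q.2 := by
  rw [pos_lt_pos_iff, key, key, ← h, add_lt_add_iff_right,
    Nat.mul_lt_mul_right (Nat.succ_pos k), add_lt_add_iff_left, Fin.val_fin_lt]

lemma monotone_line_pos_symm : Monotone fun i => a.line (a.pos.symm i).1 := fun i j hij =>
  a.line_le_line_of_key_le <| (rankEquiv_le_iff a.key_injective).1 <| by
    simpa only [pos, Equiv.apply_symm_apply] using hij

/-- The `i`-th point of cell `t` along this axis (`t` is read modulo `k + 1`; only `t ≤ k`
is used). -/
def point (t : ℕ) (i : Fin m) : Fin (k + 1) × Fin m := (Fin.ofNat (k + 1) t, (a.order t).symm i)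

lemma point_fst_val {t : ℕ} (ht : t ≤ k) (i : Fin m) : ((a.point t i).1 : ℕ) = t := by
  simp [point, Nat.mod_eq_of_lt (Nat.lt_succ_of_le ht)]

lemma pos_point_succ {t : ℕ} (ht : t < k) (hline : a.line t = a.line (t + 1)) (i : Fin m) :
    (a.pos (a.point (t + 1) i) : ℕ) = a.pos (a.point t i) + 1 := by
  apply rank_eq_rank_add_one a.key_injective
  simp only [key, a.point_fst_val ht.le, a.point_fst_val ht]
  simp only [Nat.succ_eq_add_one, point, Fin.ofNat_eq_cast, Equiv.apply_symm_apply, hline]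
  ring

end Axis

def cellCount {k m : ℕ} (Q : Finset (Fin (k + 1) × Fin m)) (t : ℕ) : ℕ :=
  #{p ∈ Q | (p.1 : ℕ) = t}

section Counting

variable {k m L : ℕ} (a : Axis k m L) (Q : Finset (Fin (k + 1) × Fin m))

lemma sum_cellCount : ∑ t ∈ range (k + 1), cellCount Q t = #Q :=
  (card_eq_sum_card_fiberwise fun p _ => mem_range.2 p.1.isLt).symm

lemma cellCount_eq_card_point_mem {t : ℕ} (ht : t ≤ k) :
    cellCount Q t = #{i | a.point t i ∈ Q} := by
  refine card_nbij' (fun p => a.order t p.2) (a.point t) ?_ ?_ ?_ ?_ <;>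
    intro p hp <;> simp only [coe_filter, Set.mem_ofPred_eq] at hp
  · simpa [Axis.point, ← hp.2] using hp.1
  · simpa [Axis.point, Fin.val_cast_of_lt (show t < k + 1 by omega)] using hp
  · simp [Axis.point, ← hp.2]
  · simp [Axis.point]

lemma dist_cellCount_le {t : ℕ} (ht : t < k) :
    Nat.dist (cellCount Q t) (cellCount Q (t + 1)) ≤
      #{i | ¬(a.point t i ∈ Q ↔ a.point (t + 1) i ∈ Q)} := by
  rw [cellCount_eq_card_point_mem a Q ht.le, cellCount_eq_card_point_mem a Q ht]
  set X : Finset (Fin m) := {i | a.point t i ∈ Q}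
  set Y : Finset (Fin m) := {i | a.point (t + 1) i ∈ Q}
  have hXY : #(X \ Y) ≤ #{i | ¬(a.point t i ∈ Q ↔ a.point (t + 1) i ∈ Q)} :=
    card_le_card fun i => by simp only [mem_sdiff, mem_filter, mem_univ, true_and, X, Y]; tauto
  have hYX : #(Y \ X) ≤ #{i | ¬(a.point t i ∈ Q ↔ a.point (t + 1) i ∈ Q)} :=
    card_le_card fun i => by simp only [mem_sdiff, mem_filter, mem_univ, true_and, X, Y]; tauto
  have := card_le_card_sdiff_add_card (s := X) (t := Y)
  have := card_le_card_sdiff_add_card (s := Y) (t := X)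
  unfold Nat.dist
  omega

lemma sum_dist_cellCount_le_card_boundary :
    ∑ t ∈ range k with a.line t = a.line (t + 1), Nat.dist (cellCount Q t) (cellCount Q (t + 1))
      ≤ #(boundary (Q.image a.pos)) := by
  set flips : ℕ → Finset (Fin m) := fun t => {i | ¬(a.point t i ∈ Q ↔ a.point (t + 1) i ∈ Q)}
  calc _ ≤ ∑ t ∈ range k with a.line t = a.line (t + 1), #(flips t) :=
        sum_le_sum fun t ht => dist_cellCount_le a Q (mem_range.1 (mem_filter.1 ht).1)
    _ = #((range k).filter (fun t => a.line t = a.line (t + 1)) |>.sigma flips) :=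
        (card_sigma _ _).symm
    _ ≤ _ := by
      refine card_le_card_of_injOn (fun x => a.pos (a.point x.1 x.2)) ?_ ?_
      · rintro ⟨t, i⟩ hti
        simp only [coe_sigma, Set.mem_sigma_iff, coe_filter, mem_range, Set.mem_ofPred_eq,
          flips, mem_univ, true_and] at hti
        refine mem_filter.2 ⟨mem_univ _, a.pos (a.point (t + 1) i),
          a.pos_point_succ hti.1.1 hti.1.2 i, ?_⟩
        simp only [a.pos.injective.mem_finset_image]
        tauto
      · rintro ⟨t, i⟩ hti ⟨t', i'⟩ hti' h
        simp only [coe_sigma, Set.mem_sigma_iff, coe_filter, mem_range, Set.mem_ofPred_eq]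
          at hti hti'
        obtain ⟨h₁, h₂⟩ := Prod.ext_iff.1 (a.pos.injective h)
        have htt : t = t' := by
          simpa [Axis.point, Fin.val_cast_of_lt (show t < k + 1 by omega),
            Fin.val_cast_of_lt (show t' < k + 1 by omega)] using congrArg Fin.val h₁
        subst htt
        simpa [Axis.point] using h₂

lemma card_image_line_le_card_boundary {T : Finset ℕ}
    (hT : ∀ t ∈ T, t ≤ k ∧ 0 < cellCount Q t ∧ cellCount Q t < m) :
    #(T.image a.line) ≤ #(boundary (Q.image a.pos)) := by
  refine card_le_card_boundary a.monotone_line_pos_symm fun c hc => ?_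
  obtain ⟨t, htT, rfl⟩ := mem_image.1 hc
  obtain ⟨htk, hpos, hlt⟩ := hT t htT
  rw [cellCount_eq_card_point_mem a Q htk] at hpos hlt
  obtain ⟨i, hi⟩ := card_pos.1 hpos
  obtain ⟨i', hi'⟩ : ∃ i', a.point t i' ∉ Q := by
    by_contra! hall
    have := card_filter_eq_iff.2 fun i (_ : i ∈ univ) => hall i
    simp only [card_univ, Fintype.card_fin] at this
    omega
  have hline : ∀ i, a.line (a.pos.symm (a.pos (a.point t i))).1 = a.line t := fun i => by
    simp [Axis.point, Fin.val_cast_of_lt (show t < k + 1 by omega)]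
  refine ⟨a.pos (a.point t i), ?_, a.pos (a.point t i'), ?_, hline i, hline i'⟩
  · simpa [a.pos.injective.mem_finset_image] using hi
  · simpa [a.pos.injective.mem_finset_image] using hi'

end Counting

lemma pos_and_lt_of_sum_dist_lt {k : ℕ} (c : ℕ → ℕ)
    (hlo : (k + 1) ^ 2 < ∑ t ∈ range (k + 1), c t)
    (hhi : ∑ t ∈ range (k + 1), c t ≤ 2 * (k + 1) ^ 2)
    (hV : ∑ t ∈ range k, Nat.dist (c t) (c (t + 1)) < k) {t : ℕ} (ht : t ≤ k) :
    0 < c t ∧ c t < 3 * (k + 1) := by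
  obtain ⟨s, hs, hcs⟩ : ∃ s ∈ range (k + 1), k + 1 < c s :=
    exists_lt_of_sum_lt (f := fun _ => k + 1) (by simpa [sq] using hlo)
  obtain ⟨s', hs', hcs'⟩ : ∃ s' ∈ range (k + 1), c s' ≤ 2 * (k + 1) :=
    exists_le_of_sum_le (g := fun _ => 2 * (k + 1)) nonempty_range_add_one
      (by simpa [sq, mul_comm, mul_assoc] using hhi)
  have h := Nat.dist_le_sum_range_dist c (Nat.lt_succ_iff.1 (mem_range.1 hs)) ht
  have h' := Nat.dist_le_sum_range_dist c (Nat.lt_succ_iff.1 (mem_range.1 hs')) ht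
  set V := ∑ t ∈ range k, Nat.dist (c t) (c (t + 1))
  simp only [Nat.dist] at h h'
  omega

lemma le_card_boundary_add_card_boundary {k K L : ℕ} (ax : Axis k (3 * (k + 1)) K)
    (ay : Axis k (3 * (k + 1)) L)
    (hstep : ∀ t < k, ax.line t = ax.line (t + 1) ∨ ay.line t = ay.line (t + 1))
    (hlines : k + 2 ≤ #((range (k + 1)).image ax.line) + #((range (k + 1)).image ay.line))
    (Q : Finset (Fin (k + 1) × Fin (3 * (k + 1)))) (hlo : (k + 1) ^ 2 < #Q)
    (hhi : #Q ≤ 2 * (k + 1) ^ 2) :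
    k ≤ #(boundary (Q.image ax.pos)) + #(boundary (Q.image ay.pos)) := by
  by_cases hV : k ≤ ∑ t ∈ range k, Nat.dist (cellCount Q t) (cellCount Q (t + 1))
  · -- every unit of variation between consecutive cells is a boundary point on one axis
    have := sum_le_sum_filter_add_sum_filter (fun t ht => hstep t (mem_range.1 ht))
      fun t => Nat.dist (cellCount Q t) (cellCount Q (t + 1))
    have := sum_dist_cellCount_le_card_boundary ax Q
    have := sum_dist_cellCount_le_card_boundary ay Q
    omega
  · -- otherwise every cell is split, so every line carries a boundary point
    have hsum := sum_cellCount Q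
    have hcells : ∀ t ∈ range (k + 1), t ≤ k ∧ 0 < cellCount Q t ∧ cellCount Q t < 3 * (k + 1) :=
      fun t ht => ⟨Nat.lt_succ_iff.1 (mem_range.1 ht),
        pos_and_lt_of_sum_dist_lt (cellCount Q) (by omega) (by omega) (by omega)
          (Nat.lt_succ_iff.1 (mem_range.1 ht))⟩
    have := card_image_line_le_card_boundary ax Q hcells
    have := card_image_line_le_card_boundary ay Q hcells
    omega

namespace GTree

variable {α : Type}

lemma leafList_sublist_of_mem_subtrees {t T : GTree α} (h : t ∈ T.subtrees) :
    t.leafList.Sublist T.leafList := by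
  induction T with
  | leaf a =>
    obtain rfl := List.mem_singleton.1 h
    exact List.Sublist.refl _
  | node l r ihl ihr =>
    simp only [subtrees, List.mem_cons, List.mem_append] at h
    rcases h with rfl | h | h
    · exact List.Sublist.refl _
    · exact (ihl h).trans (List.sublist_append_left _ _)
    · exact (ihr h).trans (List.sublist_append_right _ _)

lemma exists_mem_subtrees_length_mem {c : ℕ} (hc : 2 ≤ c) (T : GTree α)
    (hT : c ≤ T.leafList.length) :
    ∃ t ∈ T.subtrees, c ≤ t.leafList.length ∧ t.leafList.length + 2 ≤ 2 * c := by
  induction T with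
  | leaf a => simp only [leafList, List.length_singleton] at hT; omega
  | node l r ihl ihr =>
    simp only [subtrees, List.mem_cons, List.mem_append]
    by_cases hl : c ≤ l.leafList.length
    · obtain ⟨t, ht, h⟩ := ihl hl
      exact ⟨t, Or.inr (Or.inl ht), h⟩
    by_cases hr : c ≤ r.leafList.length
    · obtain ⟨t, ht, h⟩ := ihr hr
      exact ⟨t, Or.inr (Or.inr ht), h⟩
    refine ⟨node l r, Or.inl rfl, ?_⟩
    simp only [leafList, List.length_append] at hT ⊢
    omega

def comb (a : α) : List α → GTree α
  | [] => leaf a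
  | b :: l => node (leaf a) (comb b l)

lemma leafList_comb (a : α) (l : List α) : (comb a l).leafList = a :: l := by
  induction l generalizing a with
  | nil => rfl
  | cons b l ih => simp [comb, leafList, ih]

end GTree

lemma gridComplexity_le_treeGW {n : ℕ} {t T : GTree (Fin n × Fin n)} (h : t ∈ T.subtrees) :
    gridComplexity t.leafList.toFinset ≤ treeGW T :=
  List.le_max_of_le' 0 (List.mem_map_of_mem h) le_rfl

lemma card_diagram {n : ℕ} (π : Equiv.Perm (Fin n)) : #(diagram π) = n := by
  rw [diagram, card_image_of_injective _ fun _ _ h => (Prod.ext_iff.1 h).1, card_univ,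
    Fintype.card_fin]

lemma exists_isGridTree_treeGW_eq_gw {n : ℕ} (hn : 0 < n) (π : Equiv.Perm (Fin n)) :
    ∃ T, IsGridTree π T ∧ treeGW T = gw π := by
  obtain ⟨a, l, hl⟩ : ∃ a l, (diagram π).toList = a :: l :=
    List.exists_cons_of_ne_nil <| by
      rw [Ne, ← List.length_eq_zero_iff, length_toList, card_diagram]
      exact hn.ne'
  have hT : IsGridTree π (GTree.comb a l) := by
    rw [IsGridTree, GTree.leafList_comb, ← hl]
    exact ⟨nodup_toList _, toList_toFinset _⟩
  exact Nat.sInf_mem (s := {w | ∃ T, IsGridTree π T ∧ treeGW T = w}) ⟨_, _, hT, rfl⟩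

lemma eq_image_of_subset_diagram {ι : Type*} [Fintype ι] {n : ℕ} (e₁ e₂ : ι ≃ Fin n)
    {S : Finset (Fin n × Fin n)} (hS : S ⊆ diagram (e₁.symm.trans e₂)) :
    S = (univ.filter fun p => (e₁ p, e₂ p) ∈ S).image fun p => (e₁ p, e₂ p) := by
  ext ⟨i, j⟩
  simp only [mem_image, mem_filter, mem_univ, true_and]
  refine ⟨fun h => ⟨e₁.symm i, ?_⟩, fun ⟨p, hp, hpij⟩ => hpij ▸ hp⟩
  obtain ⟨i', -, hi'⟩ := mem_image.1 (hS h)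
  simp only [Prod.mk.injEq, Equiv.trans_apply] at hi'
  obtain ⟨rfl, rfl⟩ := hi'
  simpa using h

lemma le_four_mul_gw {k K L : ℕ} (ax : Axis k (3 * (k + 1)) K) (ay : Axis k (3 * (k + 1)) L)
    (hstep : ∀ t < k, ax.line t = ax.line (t + 1) ∨ ay.line t = ay.line (t + 1))
    (hlines : k + 2 ≤ #((range (k + 1)).image ax.line) + #((range (k + 1)).image ay.line)) :
    k ≤ 4 * gw (ax.pos.symm.trans ay.pos) := by
  have hn : Fintype.card (Fin (k + 1) × Fin (3 * (k + 1))) = 3 * (k + 1) ^ 2 := by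
    rw [Fintype.card_prod, Fintype.card_fin, Fintype.card_fin]; ring
  have hk : 0 < (k + 1) ^ 2 := by positivity
  obtain ⟨T, ⟨hnodup, hleaves⟩, hT⟩ :=
    exists_isGridTree_treeGW_eq_gw (by omega) (ax.pos.symm.trans ay.pos)
  have hlen : T.leafList.length = 3 * (k + 1) ^ 2 := by
    rw [← List.toFinset_card_of_nodup hnodup, hleaves, card_diagram, hn]
  -- a subtree holding between a third and two thirds of the points
  obtain ⟨t, ht, hlo, hhi⟩ :=
    T.exists_mem_subtrees_length_mem (c := (k + 1) ^ 2 + 1) (by omega) (by omega)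
  have hsub := GTree.leafList_sublist_of_mem_subtrees ht
  set S := t.leafList.toFinset
  have hS : S ⊆ diagram (ax.pos.symm.trans ay.pos) := fun x hx =>
    hleaves ▸ List.mem_toFinset.2 (hsub.subset (List.mem_toFinset.1 hx))
  set Q : Finset (Fin (k + 1) × Fin (3 * (k + 1))) := {p | (ax.pos p, ay.pos p) ∈ S}
  have hSQ := eq_image_of_subset_diagram ax.pos ay.pos hS
  have hcard : #Q = #S := by
    conv_rhs => rw [hSQ]
    exact (card_image_of_injective _ fun p q h => ax.pos.injective (Prod.ext_iff.1 h).1).symm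
  have hSlen : #S = t.leafList.length := List.toFinset_card_of_nodup (hsub.nodup hnodup)
  have hgc : gridComplexity S =
      max (intervalicity (Q.image ax.pos)) (intervalicity (Q.image ay.pos)) := by
    rw [gridComplexity, hSQ, image_image, image_image]
    rfl
  have hbd := le_card_boundary_add_card_boundary ax ay hstep hlines Q (by omega) (by omega)
  have hgw : gridComplexity S ≤ gw (ax.pos.symm.trans ay.pos) := hT ▸ gridComplexity_le_treeGW ht
  rw [hgc, max_le_iff] at hgw
  have := card_boundary_le_two_mul_intervalicity (Q.image ax.pos)
  have := card_boundary_le_two_mul_intervalicity (Q.image ay.pos)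
  omega

lemma card_filter_ne_succ_add_one_le {α : Type*} [DecidableEq α] (g : ℕ → α) {k : ℕ}
    (hg : ∀ t₁ t₂ t₃, t₁ ≤ t₂ → t₂ ≤ t₃ → t₃ ≤ k → g t₁ = g t₃ → g t₂ = g t₁) :
    #{t ∈ range k | g t ≠ g (t + 1)} + 1 ≤ #((range (k + 1)).image g) := by
  induction k with
  | zero => simp
  | succ k ih =>
    have ih := ih fun t₁ t₂ t₃ h₁₂ h₂₃ h₃ => hg t₁ t₂ t₃ h₁₂ h₂₃ (by omega)
    rw [range_add_one, filter_insert, range_add_one (n := k + 1), image_insert]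
    split_ifs with hk
    · have hnew : g (k + 1) ∉ (range (k + 1)).image g := by
        simp only [mem_image, mem_range, not_exists, not_and]
        intro t ht h
        exact hk ((hg t k (k + 1) (by omega) (by omega) le_rfl h).trans h)
      rw [card_insert_of_notMem hnew, card_insert_of_notMem (by simp)]
      omega
    · exact ih.trans (card_le_card (subset_insert _ _))

lemma fst_eq_of_le_of_le {α : Type*} {k : ℕ} (f : ℕ → α × ℕ)
    (hinj : ∀ s ≤ k, ∀ t ≤ k, f s = f t → s = t)
    (hnext : ∀ s ≤ k, ∀ t ≤ k, (f s).1 = (f t).1 → (f s).2 ≠ (f t).2 →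
      (∀ r ≤ k, (f r).1 = (f s).1 →
        ¬((f s).2 < (f r).2 ∧ (f r).2 < (f t).2 ∨ (f t).2 < (f r).2 ∧ (f r).2 < (f s).2)) →
      s = t + 1 ∨ t = s + 1)
    {t₁ t₂ t₃ : ℕ} (h₁₂ : t₁ ≤ t₂) (h₂₃ : t₂ ≤ t₃) (h₃ : t₃ ≤ k) (h : (f t₁).1 = (f t₃).1) :
    (f t₂).1 = (f t₁).1 := by
  induction hd : Nat.dist (f t₁).2 (f t₃).2 using Nat.strong_induction_on generalizing t₁ t₃
    with | _ d ih =>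
  by_cases h₂ : (f t₁).2 = (f t₃).2
  · obtain rfl := hinj t₁ (by omega) t₃ h₃ (Prod.ext h h₂)
    rw [le_antisymm h₁₂ h₂₃]
  by_cases hbetween : ∃ r ≤ k, (f r).1 = (f t₁).1 ∧
      ((f t₁).2 < (f r).2 ∧ (f r).2 < (f t₃).2 ∨ (f t₃).2 < (f r).2 ∧ (f r).2 < (f t₁).2)
  · obtain ⟨r, hr, hr₁, hbet⟩ := hbetween
    rcases le_or_gt t₂ r with h₂r | hr₂
    · exact ih _ (by simp only [← hd, Nat.dist] at *; omega) h₁₂ h₂r hr hr₁.symm rfl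
    · rw [ih _ (by simp only [← hd, Nat.dist] at *; omega) hr₂.le h₂₃ h₃ (hr₁.trans h) rfl, hr₁]
  · push Not at hbetween
    rcases hnext t₁ (by omega) t₃ h₃ h h₂ fun r hr hr₁ => by
      have := hbetween r hr hr₁
      omega with h' | h'
    · omega
    · obtain rfl | rfl : t₂ = t₁ ∨ t₂ = t₃ := by omega
      · rfl
      · exact h.symm

lemma le_card_image_fst_add_card_image_snd {α β : Type*} [DecidableEq α] [DecidableEq β]
    {k : ℕ} (cv : ℕ → α × β) (hinj : ∀ s ≤ k, ∀ t ≤ k, cv s = cv t → s = t)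
    (hfst : ∀ t₁ t₂ t₃, t₁ ≤ t₂ → t₂ ≤ t₃ → t₃ ≤ k → (cv t₁).1 = (cv t₃).1 →
      (cv t₂).1 = (cv t₁).1)
    (hsnd : ∀ t₁ t₂ t₃, t₁ ≤ t₂ → t₂ ≤ t₃ → t₃ ≤ k → (cv t₁).2 = (cv t₃).2 →
      (cv t₂).2 = (cv t₁).2) :
    k + 2 ≤ #((range (k + 1)).image fun t => (cv t).1) +
      #((range (k + 1)).image fun t => (cv t).2) := by
  have hcover : range k ⊆
      {t ∈ range k | (cv t).1 ≠ (cv (t + 1)).1} ∪ {t ∈ range k | (cv t).2 ≠ (cv (t + 1)).2} := by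
    intro t ht
    rw [mem_range] at ht
    have hne : cv t ≠ cv (t + 1) := by
      intro h
      have := hinj t (by omega) (t + 1) (by omega) h
      omega
    simp only [mem_union, mem_filter, mem_range]
    by_contra! hcon
    exact hne (Prod.ext (hcon.1 ht) (hcon.2 ht))
  have := (card_le_card hcover).trans (card_union_le _ _)
  have := card_filter_ne_succ_add_one_le (fun t => (cv t).1) hfst
  have := card_filter_ne_succ_add_one_le (fun t => (cv t).2) hsnd
  simp only [card_range] at *
  omega

section CellGraph

variable {k₀ l₀ : ℕ} {M : Fin k₀ → Fin l₀ → Option Bool} {p q : Fin k₀ × Fin l₀}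

lemma monCellGraph_adj_isSome (h : (monCellGraph M).Adj p q) : (M p.1 p.2).isSome := by
  rcases ((SimpleGraph.fromRel_adj _ _ _).1 h).2 with h | h
  exacts [h.1, h.2.1]

lemma monCellGraph_adj_fst_eq_or_snd_eq (h : (monCellGraph M).Adj p q) :
    p.1 = q.1 ∨ p.2 = q.2 := by
  rcases ((SimpleGraph.fromRel_adj _ _ _).1 h).2 with
    ⟨-, -, ⟨h, -⟩ | ⟨h, -⟩⟩ | ⟨-, -, ⟨h, -⟩ | ⟨h, -⟩⟩
  exacts [Or.inl h, Or.inr h, Or.inl h.symm, Or.inr h.symm]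

lemma monCellGraph_adj_of_fst_eq (hp : (M p.1 p.2).isSome) (hq : (M q.1 q.2).isSome)
    (h₁ : p.1 = q.1) (h₂ : p.2 ≠ q.2)
    (hempty : ∀ c : Fin k₀ × Fin l₀, c.1 = p.1 →
      (p.2 < c.2 ∧ c.2 < q.2 ∨ q.2 < c.2 ∧ c.2 < p.2) → M c.1 c.2 = none) :
    (monCellGraph M).Adj p q :=
  (SimpleGraph.fromRel_adj _ _ _).2 ⟨fun h => h₂ (congrArg Prod.snd h),
    Or.inl ⟨hp, hq, Or.inl ⟨h₁, h₂, fun j hj => hempty (p.1, j) rfl hj⟩⟩⟩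

lemma monCellGraph_adj_of_snd_eq (hp : (M p.1 p.2).isSome) (hq : (M q.1 q.2).isSome)
    (h₂ : p.2 = q.2) (h₁ : p.1 ≠ q.1)
    (hempty : ∀ c : Fin k₀ × Fin l₀, c.2 = p.2 →
      (p.1 < c.1 ∧ c.1 < q.1 ∨ q.1 < c.1 ∧ c.1 < p.1) → M c.1 c.2 = none) :
    (monCellGraph M).Adj p q :=
  (SimpleGraph.fromRel_adj _ _ _).2 ⟨fun h => h₁ (congrArg Prod.fst h),
    Or.inl ⟨hp, hq, Or.inr ⟨h₂, h₁, fun i hi => hempty (i, p.2) rfl hi⟩⟩⟩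

end CellGraph

section CellPath

variable {k₀ l₀ : ℕ} {M : Fin k₀ → Fin l₀ → Option Bool} {u v : Fin k₀ × Fin l₀}
  {w : (monCellGraph M).Walk u v}

lemma isSome_getVert (hk : 0 < w.length) {t : ℕ} (ht : t ≤ w.length) :
    (M (w.getVert t).1 (w.getVert t).2).isSome := by
  rcases ht.lt_or_eq with ht | rfl
  · exact monCellGraph_adj_isSome (w.adj_getVert_succ ht)
  · have h := w.adj_getVert_succ (i := w.length - 1) (by omega)
    rw [Nat.sub_add_cancel hk] at h
    exact monCellGraph_adj_isSome h.symm

/-- `proj` names the line of a cell and `coord` its position along that line: the path meets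
every line in a contiguous stretch. -/
lemma proj_getVert_eq_of_le_of_le {α : Type*} (proj : Fin k₀ × Fin l₀ → α)
    (coord : Fin k₀ × Fin l₀ → ℕ) (hpc : Function.Injective fun c => (proj c, coord c))
    (hadj : ∀ p q : Fin k₀ × Fin l₀, (M p.1 p.2).isSome → (M q.1 q.2).isSome →
      proj p = proj q → coord p ≠ coord q →
      (∀ c, proj c = proj p → (coord p < coord c ∧ coord c < coord q ∨
        coord q < coord c ∧ coord c < coord p) → M c.1 c.2 = none) → (monCellGraph M).Adj p q)
    (hw : w.IsPath) (hsupp : ∀ p : Fin k₀ × Fin l₀, (M p.1 p.2).isSome → p ∈ w.support)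
    (hedges : ∀ e ∈ (monCellGraph M).edgeSet, e ∈ w.edges) :
    ∀ t₁ t₂ t₃, t₁ ≤ t₂ → t₂ ≤ t₃ → t₃ ≤ w.length →
      proj (w.getVert t₁) = proj (w.getVert t₃) → proj (w.getVert t₂) = proj (w.getVert t₁) := by
  intro t₁ t₂ t₃ h₁₂ h₂₃ h₃ h
  refine fst_eq_of_le_of_le (fun t => (proj (w.getVert t), coord (w.getVert t)))
    (fun s hs t ht hst => hw.getVert_injOn hs ht (hpc hst)) ?_ h₁₂ h₂₃ h₃ h
  intro s hs t ht hst hne hnone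
  have hk : 0 < w.length := by
    by_contra
    exact hne (by rw [show s = 0 by omega, show t = 0 by omega])
  refine hw.eq_add_one_or_of_adj_getVert hedges hs ht <|
    hadj _ _ (isSome_getVert hk hs) (isSome_getVert hk ht) hst hne fun c hc hbet => ?_
  by_contra hcM
  obtain ⟨r, rfl, hr⟩ := SimpleGraph.Walk.mem_support_iff_exists_getVert.1 <|
    hsupp c (Option.ne_none_iff_isSome.1 hcM)
  exact hnone r hr hc hbet

lemma length_add_two_le_card_image_fst_add_card_image_snd (hw : w.IsPath)
    (hsupp : ∀ p : Fin k₀ × Fin l₀, (M p.1 p.2).isSome → p ∈ w.support)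
    (hedges : ∀ e ∈ (monCellGraph M).edgeSet, e ∈ w.edges) :
    w.length + 2 ≤ #((range (w.length + 1)).image fun t => (w.getVert t).1) +
      #((range (w.length + 1)).image fun t => (w.getVert t).2) :=
  le_card_image_fst_add_card_image_snd w.getVert (fun _ hs _ ht h => hw.getVert_injOn hs ht h)
    (proj_getVert_eq_of_le_of_le Prod.fst (fun c => (c.2 : ℕ))
      (fun _ _ h => Prod.ext (Prod.ext_iff.1 h).1 (Fin.ext (Prod.ext_iff.1 h).2))
      (fun _ _ hp hq h₁ h₂ => monCellGraph_adj_of_fst_eq hp hq h₁ (Fin.val_ne_iff.1 h₂))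
      hw hsupp hedges)
    (proj_getVert_eq_of_le_of_le Prod.snd (fun c => (c.1 : ℕ))
      (fun _ _ h => Prod.ext (Fin.ext (Prod.ext_iff.1 h).2) (Prod.ext_iff.1 h).1)
      (fun _ _ hp hq h₂ h₁ => monCellGraph_adj_of_snd_eq hp hq h₂ (Fin.val_ne_iff.1 h₁))
      hw hsupp hedges)

end CellPath

def colAxis {k₀ l₀ : ℕ} (k m : ℕ) (cv : ℕ → Fin k₀ × Fin l₀) : Axis k m k₀ :=
  ⟨fun t => (cv t).1, fun _ => 1⟩

def rowAxis {k₀ l₀ : ℕ} (k m : ℕ) (M : Fin k₀ → Fin l₀ → Option Bool)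
    (cv : ℕ → Fin k₀ × Fin l₀) : Axis k m l₀ :=
  ⟨fun t => (cv t).2, fun t => if M (cv t).1 (cv t).2 = some false then Fin.revPerm else 1⟩

lemma monGriddable_fin_zero {k₀ l₀ : ℕ} (M : Fin k₀ → Fin l₀ → Option Bool)
    (π : Equiv.Perm (Fin 0)) : MonGriddable M π :=
  ⟨Fin.elim0, Fin.elim0, fun i => i.elim0, fun i => i.elim0, fun i => i.elim0, fun i => i.elim0⟩

lemma monGriddable_colAxis_rowAxis {k₀ l₀ k m : ℕ} (M : Fin k₀ → Fin l₀ → Option Bool)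
    (cv : ℕ → Fin k₀ × Fin l₀) (hinj : ∀ s ≤ k, ∀ t ≤ k, cv s = cv t → s = t)
    (hsome : ∀ t ≤ k, (M (cv t).1 (cv t).2).isSome) :
    MonGriddable M ((colAxis k m cv).pos.symm.trans (rowAxis k m M cv).pos) := by
  set ax := colAxis k m cv
  set ay := rowAxis k m M cv
  have hπ : ∀ i, ay.pos.symm ((ax.pos.symm.trans ay.pos) i) = ax.pos.symm i := by simp
  refine ⟨fun i => ax.line (ax.pos.symm i).1, fun i => ay.line (ay.pos.symm i).1,
    ax.monotone_line_pos_symm, ay.monotone_line_pos_symm, fun i => ?_, fun i j hij hc hr b hb => ?_⟩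
  · simp only [hπ]
    exact hsome _ (Nat.lt_succ_iff.1 (ax.pos.symm i).1.isLt)
  simp only [hπ] at hc hr hb
  set p := ax.pos.symm i
  set q := ax.pos.symm j
  have hpq : p.1 = q.1 := Fin.ext <| hinj _ (Nat.lt_succ_iff.1 p.1.isLt) _
    (Nat.lt_succ_iff.1 q.1.isLt) (Prod.ext hc hr)
  have hlt : p.2 < q.2 := by
    have h : ax.pos p < ax.pos q := by simpa [p, q] using hij
    rw [ax.pos_lt_pos_iff_of_fst_eq hpq] at h
    simpa [ax, colAxis] using h
  change M (cv p.1).1 (cv p.1).2 = some b at hb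
  cases b
  · show ay.pos q < ay.pos p
    rw [ay.pos_lt_pos_iff_of_fst_eq hpq.symm, ← hpq]
    simpa [ay, rowAxis, hb] using hlt
  · show ay.pos p < ay.pos q
    rw [ay.pos_lt_pos_iff_of_fst_eq hpq]
    simpa [ay, rowAxis, hb] using hlt

end PPM

/-- if the cell graph of a monotone gridding matrix is a path of length `k`
(all other entries empty), then `Grid(M)` contains a permutation of grid-width ≥ k/4. -/
theorem exists_large_gridwidth_of_path {k₀ l₀ k : ℕ} (M : Fin k₀ → Fin l₀ → Option Bool)
    (u v : Fin k₀ × Fin l₀) (w : (monCellGraph M).Walk u v)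
    (hpath : w.IsPath) (hlen : w.length = k)
    (hsupp : ∀ p : Fin k₀ × Fin l₀, (M p.1 p.2).isSome → p ∈ w.support)
    (hedges : ∀ e ∈ (monCellGraph M).edgeSet, e ∈ w.edges) :
    ∃ (n : ℕ) (π : Equiv.Perm (Fin n)), MonGriddable M π ∧ k ≤ 4 * gw π := by
  subst hlen
  rcases Nat.eq_zero_or_pos w.length with hk | hk
  · exact ⟨0, 1, monGriddable_fin_zero M 1, by omega⟩
  have hinj : ∀ s ≤ w.length, ∀ t ≤ w.length, w.getVert s = w.getVert t → s = t :=
    fun s hs t ht h => hpath.getVert_injOn hs ht h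
  exact ⟨_, _, monGriddable_colAxis_rowAxis (m := 3 * (w.length + 1)) M w.getVert hinj
      fun t ht => isSome_getVert hk ht,
    le_four_mul_gw _ _ (fun t ht => monCellGraph_adj_fst_eq_or_snd_eq (w.adj_getVert_succ ht))
      (length_add_two_le_card_image_fst_add_card_image_snd hpath hsupp hedges)⟩
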